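/- arXiv:1910.08432 — 6 statements merged into one kernel-verified Lean document; each statement's English description precedes it below -/
import Mathlib

section
/- Let A be a real m×n matrix, b ∈ ℝ^m, x ∈ ℝ^n and λ ≥ 0. If Aᵀ(Ax − b) ≠ 0, then det J(x,λ) < 0; in particular the Jacobian matrix J(x,λ) is nonsingular. -/
open Matrix

/-! The top-left block `M = λAᵀA + I` is positive definite, so expanding the determinant along
its Schur complement gives `det J = -det M · (gᵀM⁻¹g)` with `g = Aᵀ(Ax − b)`; both `det M` and
`gᵀM⁻¹g` are positive when `g ≠ 0`. -/

theorem Matrix.posDef_smul_transpose_mul_self_add_one {m n : Type*} [Fintype m] [Fintype n]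
    [DecidableEq n] (A : Matrix m n ℝ) {lam : ℝ} (hlam : 0 ≤ lam) :
    (lam • (Aᵀ * A) + 1).PosDef := by
  have hAtA : (Aᵀ * A).PosSemidef := by
    simpa using posSemidef_conjTranspose_mul_self A
  exact PosDef.posSemidef_add (hAtA.smul hlam) .one

theorem Matrix.det_fromBlocks_replicateCol_replicateRow_zero {α n ι : Type*} [CommRing α]
    [Fintype n] [DecidableEq n] [Fintype ι] [DecidableEq ι] [Unique ι]
    (M : Matrix n n α) [Invertible M] (u v : n → α) :
    (fromBlocks M (replicateCol ι u) (replicateRow ι v) 0).det =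
      -(M.det * (v ⬝ᵥ M⁻¹ *ᵥ u)) := by
  rw [det_fromBlocks₁₁, det_unique (n := ι), invOf_eq_nonsing_inv, Matrix.mul_assoc,
    ← replicateCol_mulVec]
  simp [replicateRow_mul_replicateCol_apply]

theorem Matrix.PosDef.det_fromBlocks_replicateCol_replicateRow_zero_neg {n ι : Type*}
    [Fintype n] [DecidableEq n] [Fintype ι] [DecidableEq ι] [Unique ι]
    {M : Matrix n n ℝ} (hM : M.PosDef) {g : n → ℝ} (hg : g ≠ 0) :
    (fromBlocks M (replicateCol ι g) (replicateRow ι g) 0).det < 0 := by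
  have : Invertible M := hM.isUnit.invertible
  have hquad : 0 < g ⬝ᵥ M⁻¹ *ᵥ g := by
    simpa using hM.inv.dotProduct_mulVec_pos hg
  rw [det_fromBlocks_replicateCol_replicateRow_zero]
  exact neg_neg_of_pos (mul_pos hM.det_pos hquad)

/-- If `λ ≥ 0` and `Aᵀ(Ax − b) ≠ 0`, then the Jacobian block matrix
`J(x,λ) = [[λAᵀA + I, Aᵀ(Ax − b)], [(Ax − b)ᵀA, 0]]` has negative determinant;
in particular it is nonsingular. -/
theorem det_jacobian_neg {m n : ℕ} (A : Matrix (Fin m) (Fin n) ℝ)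
    (b : Fin m → ℝ) (x : Fin n → ℝ) (lam : ℝ) (hlam : 0 ≤ lam)
    (hg : Aᵀ *ᵥ (A *ᵥ x - b) ≠ 0) :
    (Matrix.fromBlocks (lam • (Aᵀ * A) + 1)
        (Matrix.replicateCol (Fin 1) (Aᵀ *ᵥ (A *ᵥ x - b)))
        (Matrix.replicateRow (Fin 1) (Aᵀ *ᵥ (A *ᵥ x - b))) (0 : Matrix (Fin 1) (Fin 1) ℝ)).det < 0
    ∧ IsUnit (Matrix.fromBlocks (lam • (Aᵀ * A) + 1)
        (Matrix.replicateCol (Fin 1) (Aᵀ *ᵥ (A *ᵥ x - b)))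
        (Matrix.replicateRow (Fin 1) (Aᵀ *ᵥ (A *ᵥ x - b))) (0 : Matrix (Fin 1) (Fin 1) ℝ)).det := by
  have hneg := PosDef.det_fromBlocks_replicateCol_replicateRow_zero_neg (ι := Fin 1)
    (posDef_smul_transpose_mul_self_add_one A hlam) hg
  exact ⟨hneg, hneg.ne.isUnit⟩
end

section
/- (Armijo step-length theorem.) Suppose f : ℝ^N → ℝ is continuously differentiable and its gradient ∇f is Lipschitz continuous with Lipschitz constant ζ > 0. Let c ∈ (0,1), u ∈ ℝ^N, and let p ∈ ℝ^N be a descent direction at u, i.e. ⟨∇f(u), p⟩ < 0. Then the Armijo condition f(u + γp) ≤ f(u) + c·γ·⟨∇f(u), p⟩ is satisfied for all γ ∈ [0, γ_max], where γ_max = 2(c − 1)⟨∇f(u), p⟩ / (ζ‖p‖²). -/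
open RealInnerProductSpace

/-!
Along the ray `t ↦ u + t • p`, the Lipschitz bound on `∇f` makes
`t ↦ f (u + t • p) - t ⟪∇f u, p⟫ - ζ t² ‖p‖² / 2` nonincreasing on `t ≥ 0` (the descent lemma).
The bound `γ ≤ γ_max` is exactly what makes the quadratic term `ζ γ² ‖p‖² / 2` at most
`(c - 1) γ ⟪∇f u, p⟫`.
-/

section LipschitzGradient

variable {E : Type*} [NormedAddCommGroup E] [InnerProductSpace ℝ E] [CompleteSpace E]
  {f : E → ℝ}

theorem DifferentiableAt.hasDerivAt_comp_add_smul {x v : E} {t : ℝ}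
    (hf : DifferentiableAt ℝ f (x + t • v)) :
    HasDerivAt (fun s : ℝ => f (x + s • v)) ⟪gradient f (x + t • v), v⟫ t := by
  have hline : HasDerivAt (fun s : ℝ => x + s • v) v t := by
    simpa using ((hasDerivAt_id t).smul_const v).const_add x
  rw [inner_gradient_left]
  exact hf.hasFDerivAt.comp_hasDerivAt t hline

variable {ζ : ℝ}

theorem antitoneOn_sub_quadratic_of_lipschitz_gradient (hf : Differentiable ℝ f)
    (hlip : ∀ u w, ‖gradient f u - gradient f w‖ ≤ ζ * ‖u - w‖) (x v : E) :
    AntitoneOn (fun t : ℝ => f (x + t • v) - t * ⟪gradient f x, v⟫ - ζ / 2 * t ^ 2 * ‖v‖ ^ 2)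
      (Set.Ici 0) := by
  have hderiv (t : ℝ) : HasDerivAt
      (fun t : ℝ => f (x + t • v) - t * ⟪gradient f x, v⟫ - ζ / 2 * t ^ 2 * ‖v‖ ^ 2)
      (⟪gradient f (x + t • v) - gradient f x, v⟫ - ζ * t * ‖v‖ ^ 2) t := by
    refine ((((hf (x + t • v)).hasDerivAt_comp_add_smul).sub ((hasDerivAt_id t).mul_const
      ⟪gradient f x, v⟫)).sub (((hasDerivAt_pow 2 t).const_mul (ζ / 2)).mul_const
      (‖v‖ ^ 2))).congr_deriv ?_
    rw [inner_sub_left]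
    simp only [Nat.cast_ofNat, Nat.add_one_sub_one, pow_one]
    ring
  refine antitoneOn_of_deriv_nonpos (convex_Ici 0)
    (fun t _ => (hderiv t).continuousAt.continuousWithinAt)
    (fun t _ => (hderiv t).differentiableAt.differentiableWithinAt) fun t ht => ?_
  rw [interior_Ici] at ht
  rw [(hderiv t).deriv, sub_nonpos]
  calc ⟪gradient f (x + t • v) - gradient f x, v⟫
      ≤ ‖gradient f (x + t • v) - gradient f x‖ * ‖v‖ := real_inner_le_norm _ _
    _ ≤ ζ * ‖t • v‖ * ‖v‖ := by
        gcongr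
        simpa using hlip (x + t • v) x
    _ = ζ * t * ‖v‖ ^ 2 := by rw [norm_smul, Real.norm_of_nonneg ht.le]; ring

theorem le_add_inner_gradient_add_sq_of_lipschitz_gradient (hf : Differentiable ℝ f)
    (hlip : ∀ u w, ‖gradient f u - gradient f w‖ ≤ ζ * ‖u - w‖) (x v : E) {t : ℝ}
    (ht : 0 ≤ t) :
    f (x + t • v) ≤ f x + t * ⟪gradient f x, v⟫ + ζ / 2 * t ^ 2 * ‖v‖ ^ 2 := by
  have := antitoneOn_sub_quadratic_of_lipschitz_gradient hf hlip x v Set.self_mem_Ici ht ht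
  simp only [zero_smul, add_zero, zero_mul, sub_zero, zero_pow two_ne_zero, mul_zero] at this
  linarith

end LipschitzGradient

/-- For `d = 0` the interval is `{0}`, since `k / 0 = 0`. -/
theorem mul_sq_le_mul_of_mem_Icc_div {d k γ : ℝ} (hd : 0 ≤ d) (hγ : γ ∈ Set.Icc 0 (k / d)) :
    d * γ ^ 2 ≤ k * γ := by
  obtain ⟨hγ0, hγk⟩ := hγ
  rcases hd.eq_or_lt with rfl | hd
  · simp [le_antisymm (by simpa using hγk) hγ0]
  · rw [le_div_iff₀ hd] at hγk
    nlinarith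

theorem armijo_step_length_general {N : ℕ} (f : EuclideanSpace ℝ (Fin N) → ℝ)
    (hf : ContDiff ℝ 1 f) (ζ : ℝ) (hζ : 0 < ζ)
    (hlip : ∀ u w : EuclideanSpace ℝ (Fin N),
      ‖gradient f u - gradient f w‖ ≤ ζ * ‖u - w‖)
    (c : ℝ)
    (u p : EuclideanSpace ℝ (Fin N)) :
    ∀ γ ∈ Set.Icc (0 : ℝ) (2 * (c - 1) * ⟪gradient f u, p⟫ / (ζ * ‖p‖ ^ 2)),
      f (u + γ • p) ≤ f u + c * γ * ⟪gradient f u, p⟫ := by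
  intro γ hγ
  have hdescent := le_add_inner_gradient_add_sq_of_lipschitz_gradient
    (hf.differentiable one_ne_zero) hlip u p hγ.1
  have hstep := mul_sq_le_mul_of_mem_Icc_div (mul_nonneg hζ.le (sq_nonneg ‖p‖)) hγ
  linear_combination hdescent + hstep / 2

/-- Armijo step-length theorem: if `f` is continuously differentiable with
`ζ`-Lipschitz gradient, `c ∈ (0,1)` and `p` is a descent direction at `u`
(`⟪∇f(u), p⟫ < 0`), then the Armijo condition
`f(u + γp) ≤ f(u) + cγ⟪∇f(u), p⟫` holds for all
`γ ∈ [0, 2(c − 1)⟪∇f(u), p⟫ / (ζ‖p‖²)]`. -/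
theorem armijo_step_length {N : ℕ} (f : EuclideanSpace ℝ (Fin N) → ℝ)
    (hf : ContDiff ℝ 1 f) (ζ : ℝ) (hζ : 0 < ζ)
    (hlip : ∀ u w : EuclideanSpace ℝ (Fin N),
      ‖gradient f u - gradient f w‖ ≤ ζ * ‖u - w‖)
    (c : ℝ) (hc : c ∈ Set.Ioo (0 : ℝ) 1)
    (u p : EuclideanSpace ℝ (Fin N))
    (hp : ⟪gradient f u, p⟫ < 0) :
    ∀ γ ∈ Set.Icc (0 : ℝ) (2 * (c - 1) * ⟪gradient f u, p⟫ / (ζ * ‖p‖ ^ 2)),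
      f (u + γ • p) ≤ f u + c * γ * ⟪gradient f u, p⟫ :=
  armijo_step_length_general f hf ζ hζ hlip c u p
end

section
/- (Nonsingularity of the projected Jacobian.) Let k ≥ 1, let B̂ ∈ ℝ^{(k+1)×(k+1)} be a lower bidiagonal matrix (B̂_{ij} = 0 unless i = j or i = j + 1) with all diagonal entries nonzero, and let B ∈ ℝ^{(k+1)×k} consist of the first k columns of B̂. Let c ∈ ℝ^{k+1}, y ∈ ℝ^k and λ ≥ 0. If the last component of By − c equals zero and ‖By − c‖ > 0, then Bᵀ(By − c) ≠ 0, and consequently the projected Jacobian J⁽ᵏ⁾(y,λ) = [[λBᵀB + I_k, Bᵀ(By − c)], [(By − c)ᵀB, 0]] is nonsingular. -/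
/-!
With `r = By − c`, `Bᵀ r = 0` says that `r` is orthogonal to the first `k` columns of `B̂`.
Since `B̂` is lower triangular, its last column is a multiple of the last unit vector, so
`r_{k+1} = 0` makes `r` orthogonal to that column as well. Thus `B̂ᵀ r = 0`, and `B̂` is
nonsingular (its determinant is the product of its diagonal), so `r = 0`.

For the Jacobian, `A = λBᵀB + I` is positive definite, and the Schur complement of `A` in the
bordered matrix `[[A, u], [uᵀ, 0]]` is `-uᵀA⁻¹u < 0` for `u ≠ 0`.
-/

open Matrix

namespace Matrix

theorem isLowerTriangular_of_bidiagonal {R : Type*} [Zero R] {n : ℕ}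
    {M : Matrix (Fin n) (Fin n) R}
    (hM : ∀ i j : Fin n, (i : ℕ) ≠ (j : ℕ) → (i : ℕ) ≠ (j : ℕ) + 1 → M i j = 0) :
    M.IsLowerTriangular := fun i j hij => by
  have : (i : ℕ) < j := hij
  exact hM i j (by omega) (by omega)

section IsLowerTriangular

variable {R : Type*} [CommRing R] [NoZeroDivisors R]

theorem det_ne_zero_of_isLowerTriangular [Nontrivial R] {m : Type*} [Fintype m] [DecidableEq m]
    [LinearOrder m] {M : Matrix m m R} (hM : M.IsLowerTriangular) (hdiag : ∀ i, M i i ≠ 0) :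
    M.det ≠ 0 := by
  rw [det_of_isLowerTriangular M hM]
  exact Finset.prod_ne_zero_iff.mpr fun i _ => hdiag i

theorem IsLowerTriangular.eq_zero_of_vecMul_submatrix_castSucc_eq_zero {n : ℕ}
    {M : Matrix (Fin (n + 1)) (Fin (n + 1)) R} (hM : M.IsLowerTriangular)
    (hdiag : ∀ i, M i i ≠ 0) {v : Fin (n + 1) → R} (hv : v (Fin.last n) = 0)
    (h : v ᵥ* M.submatrix id Fin.castSucc = 0) : v = 0 := by
  have : Nontrivial R := ⟨⟨_, _, hdiag 0⟩⟩
  refine eq_zero_of_vecMul_eq_zero (det_ne_zero_of_isLowerTriangular hM hdiag)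
    (funext fun j => ?_)
  rw [Pi.zero_apply]
  induction j using Fin.lastCases with
  | last =>
    refine Fintype.sum_eq_zero (fun i => v i * M i (Fin.last n)) fun i => ?_
    rcases (Fin.le_last i).lt_or_eq with hi | rfl
    · rw [hM (i := i) (j := Fin.last n) hi, mul_zero]
    · rw [hv, zero_mul]
  | cast j => exact congrFun h j

end IsLowerTriangular

theorem posDef_smul_transpose_mul_self_add_one_s11 {m n : Type*} [Fintype m] [Fintype n]
    [DecidableEq n] (B : Matrix m n ℝ) {lam : ℝ} (hlam : 0 ≤ lam) :
    (lam • (Bᵀ * B) + 1).PosDef :=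
  PosDef.posSemidef_add (by simpa using (posSemidef_conjTranspose_mul_self B).smul hlam) PosDef.one

theorem isUnit_det_fromBlocks_replicateCol_replicateRow_zero {n : Type*} [Fintype n]
    [DecidableEq n] {A : Matrix n n ℝ} (hA : A.PosDef) {u : n → ℝ} (hu : u ≠ 0) :
    IsUnit (fromBlocks A (replicateCol (Fin 1) u) (replicateRow (Fin 1) u) 0).det := by
  let _ := hA.isUnit.invertible
  have hschur : u ⬝ᵥ A⁻¹ *ᵥ u ≠ 0 := (hA.inv.dotProduct_mulVec_pos hu).ne'
  rw [det_fromBlocks₁₁, invOf_eq_nonsing_inv, Matrix.mul_assoc, ← replicateCol_mulVec,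
    det_fin_one]
  simpa using mul_ne_zero hA.det_pos.ne' hschur

end Matrix

theorem projected_jacobian_nonsingular_general {k : ℕ}
    (Bhat : Matrix (Fin (k + 1)) (Fin (k + 1)) ℝ)
    (hbd : ∀ i j : Fin (k + 1), (i : ℕ) ≠ (j : ℕ) → (i : ℕ) ≠ (j : ℕ) + 1 → Bhat i j = 0)
    (hdiag : ∀ i, Bhat i i ≠ 0)
    (c : Fin (k + 1) → ℝ) (y : Fin k → ℝ) (lam : ℝ) (hlam : 0 ≤ lam)
    (B : Matrix (Fin (k + 1)) (Fin k) ℝ) (hB : B = Bhat.submatrix id Fin.castSucc)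
    (hlast : (B *ᵥ y - c) (Fin.last k) = 0)
    (hpos : 0 < Real.sqrt ((B *ᵥ y - c) ⬝ᵥ (B *ᵥ y - c))) :
    Bᵀ *ᵥ (B *ᵥ y - c) ≠ 0
    ∧ IsUnit (Matrix.fromBlocks (lam • (Bᵀ * B) + 1)
        (Matrix.replicateCol (Fin 1) (Bᵀ *ᵥ (B *ᵥ y - c)))
        (Matrix.replicateRow (Fin 1) (Bᵀ *ᵥ (B *ᵥ y - c))) (0 : Matrix (Fin 1) (Fin 1) ℝ)).det := by
  have hr : B *ᵥ y - c ≠ 0 := by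
    rintro h
    simp [h] at hpos
  have hu : Bᵀ *ᵥ (B *ᵥ y - c) ≠ 0 := by
    rw [mulVec_transpose]
    exact fun h => hr <| (isLowerTriangular_of_bidiagonal hbd)
      |>.eq_zero_of_vecMul_submatrix_castSucc_eq_zero hdiag hlast (hB ▸ h)
  exact ⟨hu, isUnit_det_fromBlocks_replicateCol_replicateRow_zero
    (posDef_smul_transpose_mul_self_add_one_s11 B hlam) hu⟩

/-- Nonsingularity of the projected Jacobian: let `B̂ ∈ ℝ^{(k+1)×(k+1)}` be lower
bidiagonal with nonzero diagonal entries, `B` its first `k` columns, `λ ≥ 0`.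
If the last component of `By − c` is zero and `‖By − c‖ > 0`, then
`Bᵀ(By − c) ≠ 0` and the projected Jacobian
`J⁽ᵏ⁾(y,λ) = [[λBᵀB + I, Bᵀ(By − c)], [(By − c)ᵀB, 0]]` is nonsingular. -/
theorem projected_jacobian_nonsingular {k : ℕ} (hk : 1 ≤ k)
    (Bhat : Matrix (Fin (k + 1)) (Fin (k + 1)) ℝ)
    (hbd : ∀ i j : Fin (k + 1), (i : ℕ) ≠ (j : ℕ) → (i : ℕ) ≠ (j : ℕ) + 1 → Bhat i j = 0)
    (hdiag : ∀ i, Bhat i i ≠ 0)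
    (c : Fin (k + 1) → ℝ) (y : Fin k → ℝ) (lam : ℝ) (hlam : 0 ≤ lam)
    (B : Matrix (Fin (k + 1)) (Fin k) ℝ) (hB : B = Bhat.submatrix id Fin.castSucc)
    (hlast : (B *ᵥ y - c) (Fin.last k) = 0)
    (hpos : 0 < Real.sqrt ((B *ᵥ y - c) ⬝ᵥ (B *ᵥ y - c))) :
    Bᵀ *ᵥ (B *ᵥ y - c) ≠ 0
    ∧ IsUnit (Matrix.fromBlocks (lam • (Bᵀ * B) + 1)
        (Matrix.replicateCol (Fin 1) (Bᵀ *ᵥ (B *ᵥ y - c)))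
        (Matrix.replicateRow (Fin 1) (Bᵀ *ᵥ (B *ᵥ y - c))) (0 : Matrix (Fin 1) (Fin 1) ℝ)).det :=
  projected_jacobian_nonsingular_general Bhat hbd hdiag c y lam hlam B hB hlast hpos
end

section
/- (Residual lower bound is preserved by the damped Newton update.) Let B ∈ ℝ^{(k+1)×k}, c ∈ ℝ^{k+1}, ȳ ∈ ℝ^k, Δy ∈ ℝ^k and σ ≥ 0. Suppose ‖Bȳ − c‖ ≥ σ and (Bȳ − c)ᵀ B Δy = −½(‖Bȳ − c‖² − σ²). Then for every γ ∈ [0,1], writing y = ȳ + γΔy, it holds that ‖By − c‖² ≥ σ² + γ²‖BΔy‖²; in particular ‖By − c‖ ≥ σ. -/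
open Matrix

section DampedStep

variable {ι R : Type*} [Fintype ι]

theorem dotProduct_add_smul_self [CommRing R] (r d : ι → R) (γ : R) :
    (r + γ • d) ⬝ᵥ (r + γ • d) = r ⬝ᵥ r + 2 * γ * (r ⬝ᵥ d) + γ ^ 2 * (d ⬝ᵥ d) := by
  simp only [add_dotProduct, dotProduct_add, smul_dotProduct, dotProduct_smul, smul_eq_mul,
    dotProduct_comm d r]
  ring

/-- Under the Newton condition the excess `‖r + γd‖² - s - γ²‖d‖²` is `(1 - γ)(‖r‖² - s)`. -/
theorem le_dotProduct_add_smul_self_of_newton [Field R] [LinearOrder R] [IsStrictOrderedRing R]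
    {r d : ι → R} {s γ : R} (hs : s ≤ r ⬝ᵥ r)
    (hnewton : r ⬝ᵥ d = -(1 / 2) * (r ⬝ᵥ r - s)) (hγ : γ ∈ Set.Icc (0 : R) 1) :
    s + γ ^ 2 * (d ⬝ᵥ d) ≤ (r + γ • d) ⬝ᵥ (r + γ • d) := by
  have hslack : 0 ≤ (1 - γ) * (r ⬝ᵥ r - s) := mul_nonneg (sub_nonneg.2 hγ.2) (sub_nonneg.2 hs)
  rw [dotProduct_add_smul_self, hnewton]
  linear_combination hslack

end DampedStep

/-- Residual lower bound is preserved by the damped Newton update: if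
`‖Bȳ − c‖ ≥ σ` and `(Bȳ − c)ᵀBΔy = −½(‖Bȳ − c‖² − σ²)`, then for every
`γ ∈ [0,1]`, with `y = ȳ + γΔy`, one has
`‖By − c‖² ≥ σ² + γ²‖BΔy‖²`, and in particular `‖By − c‖ ≥ σ`. -/
theorem residual_lower_bound_preserved {k : ℕ}
    (B : Matrix (Fin (k + 1)) (Fin k) ℝ) (c : Fin (k + 1) → ℝ)
    (ybar Δy : Fin k → ℝ) (σ : ℝ) (hσ : 0 ≤ σ)
    (hres : σ ≤ Real.sqrt ((B *ᵥ ybar - c) ⬝ᵥ (B *ᵥ ybar - c)))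
    (hnewton : (B *ᵥ ybar - c) ⬝ᵥ (B *ᵥ Δy)
      = -(1 / 2) * ((B *ᵥ ybar - c) ⬝ᵥ (B *ᵥ ybar - c) - σ ^ 2)) :
    ∀ γ ∈ Set.Icc (0 : ℝ) 1,
      σ ^ 2 + γ ^ 2 * ((B *ᵥ Δy) ⬝ᵥ (B *ᵥ Δy))
          ≤ (B *ᵥ (ybar + γ • Δy) - c) ⬝ᵥ (B *ᵥ (ybar + γ • Δy) - c)
      ∧ σ ≤ Real.sqrt ((B *ᵥ (ybar + γ • Δy) - c) ⬝ᵥ (B *ᵥ (ybar + γ • Δy) - c)) := by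
  intro γ hγ
  have hresidual : B *ᵥ (ybar + γ • Δy) - c = (B *ᵥ ybar - c) + γ • (B *ᵥ Δy) := by
    rw [mulVec_add, mulVec_smul]
    abel
  have hσsq : σ ^ 2 ≤ (B *ᵥ ybar - c) ⬝ᵥ (B *ᵥ ybar - c) :=
    (Real.le_sqrt hσ (Fintype.sum_nonneg fun i => mul_self_nonneg _)).1 hres
  have hbound := le_dotProduct_add_smul_self_of_newton hσsq hnewton hγ
  rw [hresidual]
  refine ⟨hbound, Real.le_sqrt_of_sq_le (le_trans ?_ hbound)⟩
  exact le_add_of_nonneg_right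
    (mul_nonneg (sq_nonneg γ) (Fintype.sum_nonneg fun i => mul_self_nonneg _))
end

section
/- (Global convergence of the Projected Newton method.) Let A be a real m×n matrix, b ∈ ℝ^m, σ > 0, and define F(x,λ) = (λ·Aᵀ(Ax − b) + x, ½‖Ax − b‖² − ½σ²). Let c ∈ (0,1), τ ∈ (0,1), ζ > 0, and let sequences (x_k, λ_k) ∈ ℝ^n × ℝ, nonzero directions p_{k+1} ∈ ℝ^n × ℝ and step-lengths γ_{k+1} ∈ (0,1] satisfy for all k ≥ 0: (i) the sufficient decrease condition ‖F(x_{k+1}, λ_{k+1})‖² ≤ (1 − 2cγ_{k+1})‖F(x_k, λ_k)‖², and (ii) the step-length lower bound γ_{k+1} ≥ min(1, 2(1 − c)τ‖F(x_k, λ_k)‖² / (ζ‖p_{k+1}‖²)). Then either ‖F(x_k, λ_k)‖ = 0 for some k ≥ 0, or lim_{k→∞} min(‖F(x_k, λ_k)‖, ‖F(x_k, λ_k)‖² / ‖p_{k+1}‖) = 0. -/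
open Matrix Filter

/-- The Euclidean norm of `F(x,λ) = (λAᵀ(Ax − b) + x, ½‖Ax − b‖² − ½σ²)`. -/
noncomputable def Fnorm {m n : ℕ} (A : Matrix (Fin m) (Fin n) ℝ) (b : Fin m → ℝ)
    (σ : ℝ) (x : Fin n → ℝ) (lam : ℝ) : ℝ :=
  Real.sqrt ((lam • (Aᵀ *ᵥ (A *ᵥ x - b)) + x) ⬝ᵥ (lam • (Aᵀ *ᵥ (A *ᵥ x - b)) + x)
    + ((A *ᵥ x - b) ⬝ᵥ (A *ᵥ x - b) / 2 - σ ^ 2 / 2) ^ 2)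

/-- The Euclidean norm of a direction `p ∈ ℝⁿ × ℝ`. -/
noncomputable def Pnorm {n : ℕ} (p : (Fin n → ℝ) × ℝ) : ℝ :=
  Real.sqrt (p.1 ⬝ᵥ p.1 + p.2 ^ 2)

/-! A decrease `f_{k+1} ≤ (1 - 2cγ) f_k` with `γ ≥ β ≥ 0` telescopes: the nonnegative merit values
converge, so their successive differences, which dominate `2c β_k f_k`, tend to `0`. The lower
bound (ii) on the step length makes `β_k f_k` comparable, up to the constant
`min 1 (2(1 - c)τ/ζ)`, with the square of `min(‖F_k‖, ‖F_k‖² / ‖p_{k+1}‖)`. -/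

theorem tendsto_zero_of_le_sub_succ {f a : ℕ → ℝ} (hf : BddBelow (Set.range f))
    (ha : ∀ k, 0 ≤ a k) (hdec : ∀ k, a k ≤ f k - f (k + 1)) :
    Tendsto a atTop (nhds 0) := by
  have hanti : Antitone f := antitone_nat_of_succ_le fun k => by linarith [ha k, hdec k]
  have hlim := tendsto_atTop_ciInf hanti hf
  have hdiff : Tendsto (fun k => f k - f (k + 1)) atTop (nhds 0) := by
    simpa using hlim.sub (hlim.comp (tendsto_add_atTop_nat 1))
  exact tendsto_of_tendsto_of_tendsto_of_le_of_le tendsto_const_nhds hdiff ha hdec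

theorem tendsto_mul_zero_of_sufficient_decrease {f β γ : ℕ → ℝ} {c : ℝ} (hc : 0 < c)
    (hf : ∀ k, 0 ≤ f k) (hβ : ∀ k, 0 ≤ β k) (hβγ : ∀ k, β k ≤ γ k)
    (hdec : ∀ k, f (k + 1) ≤ (1 - 2 * c * γ k) * f k) :
    Tendsto (fun k => β k * f k) atTop (nhds 0) := by
  refine tendsto_zero_of_le_sub_succ (f := fun k => f k / (2 * c))
    ⟨0, ?_⟩ (fun k => mul_nonneg (hβ k) (hf k)) fun k => ?_
  · rintro _ ⟨k, rfl⟩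
    exact div_nonneg (hf k) (mul_pos two_pos hc).le
  · rw [← sub_div, le_div_iff₀ (mul_pos two_pos hc)]
    nlinarith [mul_le_mul_of_nonneg_right (hβγ k) (hf k), hdec k]

theorem min_one_mul_min_one_le {C t : ℝ} (hC : 0 ≤ C) (ht : 0 ≤ t) :
    min 1 C * min 1 t ≤ min 1 (C * t) :=
  le_min (mul_le_one₀ (min_le_left _ _) (le_min zero_le_one ht) (min_le_left _ _))
    (mul_le_mul (min_le_right _ _) (min_le_right _ _) (le_min zero_le_one ht) hC)

theorem sq_min_self_sq_div {F P : ℝ} (hF : 0 ≤ F) (hP : 0 ≤ P) :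
    min F (F ^ 2 / P) ^ 2 = min 1 (F ^ 2 / P ^ 2) * F ^ 2 := by
  rw [min_mul_of_nonneg _ _ (sq_nonneg F), one_mul]
  rcases le_total F (F ^ 2 / P) with h | h
  · rw [min_eq_left h, min_eq_left]
    calc F ^ 2 ≤ (F ^ 2 / P) ^ 2 := pow_le_pow_left₀ hF h 2
      _ = F ^ 2 / P ^ 2 * F ^ 2 := by ring
  · rw [min_eq_right h, min_eq_right]
    · ring
    calc F ^ 2 / P ^ 2 * F ^ 2 = (F ^ 2 / P) ^ 2 := by ring
      _ ≤ F ^ 2 := pow_le_pow_left₀ (div_nonneg (sq_nonneg F) hP) h 2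

theorem projected_newton_global_convergence_general {m n : ℕ}
    (A : Matrix (Fin m) (Fin n) ℝ) (b : Fin m → ℝ) (σ : ℝ)
    (c τ ζ : ℝ) (hc : c ∈ Set.Ioo (0 : ℝ) 1) (hτ : τ ∈ Set.Ioo (0 : ℝ) 1) (hζ : 0 < ζ)
    (x : ℕ → Fin n → ℝ) (lam : ℕ → ℝ)
    (p : ℕ → (Fin n → ℝ) × ℝ) (γ : ℕ → ℝ)
    (hdec : ∀ k, Fnorm A b σ (x (k + 1)) (lam (k + 1)) ^ 2
      ≤ (1 - 2 * c * γ (k + 1)) * Fnorm A b σ (x k) (lam k) ^ 2)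
    (hlb : ∀ k, min 1 (2 * (1 - c) * τ * Fnorm A b σ (x k) (lam k) ^ 2
        / (ζ * Pnorm (p (k + 1)) ^ 2)) ≤ γ (k + 1)) :
    (∃ k, Fnorm A b σ (x k) (lam k) = 0)
    ∨ Tendsto (fun k => min (Fnorm A b σ (x k) (lam k))
        (Fnorm A b σ (x k) (lam k) ^ 2 / Pnorm (p (k + 1)))) atTop (nhds 0) := by
  right
  set F : ℕ → ℝ := fun k => Fnorm A b σ (x k) (lam k)
  set P : ℕ → ℝ := fun k => Pnorm (p (k + 1))
  set C : ℝ := 2 * (1 - c) * τ / ζ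
  have hC : 0 < C := div_pos (mul_pos (mul_pos two_pos (sub_pos.2 hc.2)) hτ.1) hζ
  have hF : ∀ k, 0 ≤ F k := fun k => Real.sqrt_nonneg _
  have hP : ∀ k, 0 ≤ P k := fun k => Real.sqrt_nonneg _
  have hlb' : ∀ k, min 1 (C * (F k ^ 2 / P k ^ 2)) ≤ γ (k + 1) := fun k => by
    simpa only [mul_div_mul_comm] using hlb k
  have hβf : Tendsto (fun k => min 1 (C * (F k ^ 2 / P k ^ 2)) * F k ^ 2) atTop (nhds 0) :=
    tendsto_mul_zero_of_sufficient_decrease hc.1 (fun k => sq_nonneg _)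
      (fun k => le_min zero_le_one (by positivity)) hlb' hdec
  have hbound : ∀ k, min 1 C * min (F k) (F k ^ 2 / P k) ^ 2
      ≤ min 1 (C * (F k ^ 2 / P k ^ 2)) * F k ^ 2 := fun k => by
    rw [sq_min_self_sq_div (hF k) (hP k), ← mul_assoc]
    exact mul_le_mul_of_nonneg_right (min_one_mul_min_one_le hC.le (by positivity)) (sq_nonneg _)
  have hsq : Tendsto (fun k => min (F k) (F k ^ 2 / P k) ^ 2) atTop (nhds 0) :=
    tendsto_of_tendsto_of_tendsto_of_le_of_le tendsto_const_nhds
      (by simpa only [zero_div] using hβf.div_const (min 1 C)) (fun k => sq_nonneg _)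
      fun k => (le_div_iff₀' (lt_min one_pos hC)).2 (hbound k)
  have hmin : ∀ k, 0 ≤ min (F k) (F k ^ 2 / P k) := fun k =>
    le_min (hF k) (div_nonneg (sq_nonneg _) (hP k))
  simpa only [Real.sqrt_zero, Real.sqrt_sq (hmin _)] using hsq.sqrt

/-- Global convergence of the Projected Newton method: if the iterates satisfy
the sufficient decrease condition (i) and the step-length lower bound (ii),
then either `‖F(x_k,λ_k)‖ = 0` for some `k`, or
`min(‖F(x_k,λ_k)‖, ‖F(x_k,λ_k)‖²/‖p_{k+1}‖) → 0`. -/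
theorem projected_newton_global_convergence {m n : ℕ}
    (A : Matrix (Fin m) (Fin n) ℝ) (b : Fin m → ℝ) (σ : ℝ) (hσ : 0 < σ)
    (c τ ζ : ℝ) (hc : c ∈ Set.Ioo (0 : ℝ) 1) (hτ : τ ∈ Set.Ioo (0 : ℝ) 1) (hζ : 0 < ζ)
    (x : ℕ → Fin n → ℝ) (lam : ℕ → ℝ)
    (p : ℕ → (Fin n → ℝ) × ℝ) (γ : ℕ → ℝ)
    (hp : ∀ k, p (k + 1) ≠ 0)
    (hγ : ∀ k, γ (k + 1) ∈ Set.Ioc (0 : ℝ) 1)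
    (hdec : ∀ k, Fnorm A b σ (x (k + 1)) (lam (k + 1)) ^ 2
      ≤ (1 - 2 * c * γ (k + 1)) * Fnorm A b σ (x k) (lam k) ^ 2)
    (hlb : ∀ k, min 1 (2 * (1 - c) * τ * Fnorm A b σ (x k) (lam k) ^ 2
        / (ζ * Pnorm (p (k + 1)) ^ 2)) ≤ γ (k + 1)) :
    (∃ k, Fnorm A b σ (x k) (lam k) = 0)
    ∨ Tendsto (fun k => min (Fnorm A b σ (x k) (lam k))
        (Fnorm A b σ (x k) (lam k) ^ 2 / Pnorm (p (k + 1)))) atTop (nhds 0) :=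
  projected_newton_global_convergence_general A b σ c τ ζ hc hτ hζ x lam p γ hdec hlb
end

section
/- (Convergence of the residual norm under bounded inverse Jacobians.) Let A be a real m×n matrix, b ∈ ℝ^m, σ > 0, and define F(x,λ) = (λ·Aᵀ(Ax − b) + x, ½‖Ax − b‖² − ½σ²). Let c ∈ (0,1), τ ∈ (0,1), ζ > 0, M > 0, and let sequences (x_k, λ_k) ∈ ℝ^n × ℝ, nonzero directions p_{k+1} ∈ ℝ^n × ℝ and step-lengths γ_{k+1} ∈ (0,1] satisfy for all k ≥ 0: (i) ‖F(x_{k+1}, λ_{k+1})‖² ≤ (1 − 2cγ_{k+1})‖F(x_k, λ_k)‖², (ii) γ_{k+1} ≥ min(1, 2(1 − c)τ‖F(x_k, λ_k)‖² / (ζ‖p_{k+1}‖²)), and (iii) ‖p_{k+1}‖ ≤ M‖F(x_k, λ_k)‖. Then lim_{k→∞} ‖F(x_k, λ_k)‖ = 0. -/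
open Matrix Filter

/-- Convergence of the residual norm under bounded inverse Jacobians: if in
addition to the sufficient decrease condition (i) and the step-length lower
bound (ii), the directions satisfy `‖p_{k+1}‖ ≤ M‖F(x_k,λ_k)‖`, then
`‖F(x_k,λ_k)‖ → 0`. -/
theorem residual_norm_tendsto_zero {m n : ℕ}
    (A : Matrix (Fin m) (Fin n) ℝ) (b : Fin m → ℝ) (σ : ℝ) (hσ : 0 < σ)
    (c τ ζ M : ℝ) (hc : c ∈ Set.Ioo (0 : ℝ) 1) (hτ : τ ∈ Set.Ioo (0 : ℝ) 1)
    (hζ : 0 < ζ) (hM : 0 < M)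
    (x : ℕ → Fin n → ℝ) (lam : ℕ → ℝ)
    (p : ℕ → (Fin n → ℝ) × ℝ) (γ : ℕ → ℝ)
    (hp : ∀ k, p (k + 1) ≠ 0)
    (hγ : ∀ k, γ (k + 1) ∈ Set.Ioc (0 : ℝ) 1)
    (hdec : ∀ k, Fnorm A b σ (x (k + 1)) (lam (k + 1)) ^ 2
      ≤ (1 - 2 * c * γ (k + 1)) * Fnorm A b σ (x k) (lam k) ^ 2)
    (hlb : ∀ k, min 1 (2 * (1 - c) * τ * Fnorm A b σ (x k) (lam k) ^ 2
        / (ζ * Pnorm (p (k + 1)) ^ 2)) ≤ γ (k + 1))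
    (hbound : ∀ k, Pnorm (p (k + 1)) ≤ M * Fnorm A b σ (x k) (lam k)) :
    Tendsto (fun k => Fnorm A b σ (x k) (lam k)) atTop (nhds 0) := by

  set f : ℕ → ℝ := fun k => Fnorm A b σ (x k) (lam k) with hf
  obtain ⟨hc0, hc1⟩ := hc
  obtain ⟨hτ0, hτ1⟩ := hτ
  have hfnn : ∀ k, 0 ≤ f k := fun k => Real.sqrt_nonneg _
  have hPnn : ∀ k, 0 ≤ Pnorm (p k) := fun k => Real.sqrt_nonneg _
  have hds : ∀ v : Fin n → ℝ, 0 ≤ v ⬝ᵥ v := fun v =>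
    Finset.sum_nonneg fun i _ => mul_self_nonneg _
  have hPpos : ∀ k, 0 < Pnorm (p (k + 1)) := by
    intro k
    rcases (hPnn (k+1)).lt_or_eq with h | h
    · exact h
    · exfalso
      have harg : (p (k+1)).1 ⬝ᵥ (p (k+1)).1 + (p (k+1)).2 ^ 2 = 0 := by
        have hnn : 0 ≤ (p (k+1)).1 ⬝ᵥ (p (k+1)).1 + (p (k+1)).2 ^ 2 := by
          have := hds ((p (k+1)).1)
          nlinarith [sq_nonneg ((p (k+1)).2)]
        have := (Real.sqrt_eq_zero hnn).mp h.symm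
        exact this
      have h1 : (p (k+1)).1 ⬝ᵥ (p (k+1)).1 = 0 := by
        have := hds ((p (k+1)).1)
        nlinarith [sq_nonneg ((p (k+1)).2)]
      have h2 : (p (k+1)).2 = 0 := by
        have : (p (k+1)).2 ^ 2 = 0 := by
          have := hds ((p (k+1)).1)
          nlinarith
        exact pow_eq_zero_iff (by norm_num) |>.mp this
      have h1' : (p (k+1)).1 = 0 := by
        exact (dotProduct_self_eq_zero).mp h1
      exact hp k (Prod.ext h1' h2)
  have hfpos : ∀ k, 0 < f k := by
    intro k
    have h := hbound k
    have := hPpos k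
    nlinarith [hfnn k]
  -- uniform lower bound on step sizes
  set δ : ℝ := min 1 (2 * (1 - c) * τ / (ζ * M ^ 2)) with hδ
  have hδpos : 0 < δ := by
    apply lt_min one_pos
    apply div_pos (by nlinarith) (by positivity)
  have hδ1 : δ ≤ 1 := min_le_left _ _
  have hγδ : ∀ k, δ ≤ γ (k + 1) := by
    intro k
    refine le_trans ?_ (hlb k)
    apply min_le_min le_rfl
    have hb := hbound k
    have hP := hPpos k
    rw [div_le_div_iff₀ (by positivity) (mul_pos hζ (pow_pos hP 2))]
    have hP2 : Pnorm (p (k+1)) ^ 2 ≤ M ^ 2 * f k ^ 2 := by nlinarith [hfpos k]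
    have hnn : (0:ℝ) ≤ 2 * (1 - c) * τ * ζ := by
      have h1c : (0:ℝ) < 1 - c := by linarith
      positivity
    show 2 * (1 - c) * τ * (ζ * Pnorm (p (k+1)) ^ 2)
        ≤ 2 * (1 - c) * τ * f k ^ 2 * (ζ * M ^ 2)
    nlinarith [mul_le_mul_of_nonneg_left hP2 hnn]
  set r : ℝ := max (1 - 2 * c * δ) 0 with hr
  have hr0 : 0 ≤ r := le_max_right _ _
  have hr1 : r < 1 := by
    apply max_lt _ one_pos
    nlinarith
  have hstep : ∀ k, f (k + 1) ^ 2 ≤ r * f k ^ 2 := by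
    intro k
    have h1 := hdec k
    have h2 := hγδ k
    have h3 : (1 - 2 * c * γ (k + 1)) ≤ 1 - 2 * c * δ := by nlinarith
    calc f (k+1) ^ 2 ≤ (1 - 2 * c * γ (k + 1)) * f k ^ 2 := h1
      _ ≤ (1 - 2 * c * δ) * f k ^ 2 := by nlinarith [sq_nonneg (f k)]
      _ ≤ r * f k ^ 2 := by nlinarith [sq_nonneg (f k), le_max_left (1 - 2*c*δ) (0:ℝ)]
  have hgeom : ∀ k, f k ^ 2 ≤ r ^ k * f 0 ^ 2 := by
    intro k
    induction k with
    | zero => simp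
    | succ k ih =>
      calc f (k+1) ^ 2 ≤ r * f k ^ 2 := hstep k
        _ ≤ r * (r ^ k * f 0 ^ 2) := by nlinarith
        _ = r ^ (k+1) * f 0 ^ 2 := by ring
  have hsp : ∀ k : ℕ, Real.sqrt (r ^ k) = Real.sqrt r ^ k := by
    intro k
    induction k with
    | zero => simp
    | succ k ih => rw [pow_succ, pow_succ, Real.sqrt_mul (by positivity), ih]
  have hq : ∀ k, f k ≤ Real.sqrt r ^ k * f 0 := by
    intro k
    have h1 : f k = Real.sqrt (f k ^ 2) := by
      rw [Real.sqrt_sq (hfnn k)]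
    rw [h1]
    calc Real.sqrt (f k ^ 2) ≤ Real.sqrt (r ^ k * f 0 ^ 2) :=
          Real.sqrt_le_sqrt (hgeom k)
      _ = Real.sqrt (r ^ k) * Real.sqrt (f 0 ^ 2) := Real.sqrt_mul (by positivity) _
      _ = Real.sqrt r ^ k * f 0 := by
          rw [Real.sqrt_sq (hfnn 0), hsp k]
  have hsr : Real.sqrt r < 1 := by
    rw [show (1:ℝ) = Real.sqrt 1 by simp]
    exact Real.sqrt_lt_sqrt hr0 hr1
  have hlim : Tendsto (fun k => Real.sqrt r ^ k * f 0) atTop (nhds 0) := by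
    have := tendsto_pow_atTop_nhds_zero_of_lt_one (Real.sqrt_nonneg r) hsr
    simpa using this.mul_const (f 0)
  exact squeeze_zero hfnn hq hlim
end
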